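/- arXiv:math/0405341 — 7 statements merged into one kernel-verified Lean document; each statement's English description precedes it below -/
import Mathlib

section
/- For every L ≤ 1.07 there exist real numbers g_1 ≥ g_2 > 0 and p_1, p_2 > 0 with p_1 + p_2 = 1 such that for every k ≥ 0 with k·p_1 ≤ 1 one has p_1/g_1 + (p_2/g_2)·exp( ( log(g_2/g_1)·k + (1/L)·ψ(k) )·p_1 ) > 1/(p_1 g_1 + p_2 g_2). In other words, the kernel lemma fails for every L ≤ 1.07 already with m = 2 atoms. -/
/-!
Take two atoms with `g₂ / g₁ = q` and a small weight `p₁ = ε`. For `-1/L ≤ log q` the minimum of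
`log q · k + ψ(k) / L` over `k` is `-L (log q)²`, attained at `k = -2 L log q ≤ 2` on the quadratic
branch of `ψ`. To first order in `ε` the required inequality then becomes
`(1 - q)² > L q (log q)²`, which for `q = 491/1250` holds as long as `L < 1.0747`.
-/

/-- The function ψ from Talagrand's kernel lemma: ψ(x) = x²/4 for x ≤ 2, x − 1 for x ≥ 2. -/
noncomputable def psi (x : ℝ) : ℝ := if x ≤ 2 then x ^ 2 / 4 else x - 1

lemma psi_nonneg (x : ℝ) : 0 ≤ psi x := by
  unfold psi
  split_ifs with h
  · positivity
  · linarith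

lemma neg_sq_div_le_mul_add_mul_psi {a s : ℝ} (ha : 0 < a) (hs : -a ≤ s) (k : ℝ) :
    -(s ^ 2 / a) ≤ s * k + a * psi k := by
  rw [neg_le_iff_add_nonneg', div_add' _ _ _ ha.ne']
  apply div_nonneg _ ha.le
  unfold psi
  split_ifs with hk
  · nlinarith [sq_nonneg (a * k + 2 * s)]
  · nlinarith [mul_nonneg (by linarith : 0 ≤ s + a) (by linarith : 0 ≤ k - 2)]

lemma neg_le_log_491_div_1250 : -(100 / 107 : ℝ) ≤ Real.log (491 / 1250) := by
  have hexp : (1250 / 491 : ℝ) ≤ Real.exp (100 / 107) :=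
    le_trans (by norm_num [Finset.sum_range_succ, Nat.factorial])
      (Real.sum_le_exp_of_nonneg (by norm_num) 8)
  rw [show (491 / 1250 : ℝ) = (1250 / 491)⁻¹ by norm_num, Real.log_inv, neg_le_neg_iff]
  exact (Real.log_le_iff_le_exp (by norm_num)).2 hexp

/-- For every L ≤ 1.07 the kernel lemma fails already for m = 2 atoms: there are
g₁ ≥ g₂ > 0 and positive weights p₁ + p₂ = 1 such that no admissible k works. -/
theorem kernel_lemma_fails (L : ℝ) (hL0 : 0 < L) (hL : L ≤ 1.07) :
    ∃ g₁ g₂ p₁ p₂ : ℝ, g₂ ≤ g₁ ∧ 0 < g₂ ∧ 0 < p₁ ∧ 0 < p₂ ∧ p₁ + p₂ = 1 ∧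
      ∀ k : ℝ, 0 ≤ k → k * p₁ ≤ 1 →
        1 / (p₁ * g₁ + p₂ * g₂) <
          p₁ / g₁ + (p₂ / g₂) *
            Real.exp ((Real.log (g₂ / g₁) * k + (1 / L) * psi k) * p₁) := by
  refine ⟨1, 491 / 1250, 1 / 500, 499 / 500, by norm_num, by norm_num, by norm_num, by norm_num,
    by norm_num, fun k _ _ => ?_⟩
  simp only [div_one]
  set s := Real.log (491 / 1250 : ℝ)
  have hs : -(100 / 107) ≤ s := neg_le_log_491_div_1250
  have hs0 : s < 0 := Real.log_neg (by norm_num) (by norm_num)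
  have hL' : 100 / 107 ≤ 1 / L := by
    rw [le_div_iff₀ hL0]
    linarith
  have hexponent : -(100 / 107) ≤ s * k + (1 / L) * psi k :=
    calc -(100 / 107) ≤ -(s ^ 2 / (100 / 107)) := by
          rw [neg_le_neg_iff, div_le_iff₀ (by norm_num)]
          nlinarith
      _ ≤ s * k + 100 / 107 * psi k := neg_sq_div_le_mul_add_mul_psi (by norm_num) hs k
      _ ≤ s * k + (1 / L) * psi k := by gcongr; exact psi_nonneg k
  calc 1 / (1 / 500 * 1 + 499 / 500 * (491 / 1250))
      < 1 / 500 + 499 / 500 / (491 / 1250) * (-(100 / 107) * (1 / 500) + 1) := by norm_num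
    _ ≤ 1 / 500 + 499 / 500 / (491 / 1250) * Real.exp (-(100 / 107) * (1 / 500)) := by
      gcongr
      exact Real.add_one_le_exp _
    _ ≤ 1 / 500 + 499 / 500 / (491 / 1250) * Real.exp ((s * k + 1 / L * psi k) * (1 / 500)) := by
      gcongr
end

section
/- Let L ≥ 1.12, let g_1 ≥ g_2 ≥ … ≥ g_m > 0 and let p_1, …, p_m > 0 with p_1 + … + p_m = 1. Assume that log(g_1/g_m) ≤ 1/L and that Σ_{j<m} 2L·log(g_j/g_m)·p_j ≤ 1. Then Σ_{i≤m} (p_i/g_i) · exp( −L · Σ_{j<i} (log(g_j/g_i))² · p_j ) ≤ 1/(p_1 g_1 + … + p_m g_m). -/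
/-!
Write `F i = exp (-L B i)` with `B i = ∑_{j<i} log (g j / g i)² p j`; the claim is
`∑_{i,j} p i p j F i g j / g i ≤ 1`. Pair the `(i, j)` and `(j, i)` terms for `i < j`: with
`d = log (g i / g j) ∈ [0, 1/L]` and `F j ≤ F i`,
`e^{-d} F i + e^d F j ≤ F i + F j + (e^d + e^{-d} - 2) F j ≤ F i + F j + L d² F j`,
the last step by the degree-four Taylor bound for `exp` and `L ≥ 1.12`. Summing, the double sum is
at most `∑ i, p i F i (1 + L B i) ≤ ∑ i, p i = 1`, because `(1 + x) e^{-x} ≤ 1`.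
-/

open Finset Real

theorem Finset.sum_sum_le_sum_sum_of_add_swap_le {ι M : Type*} [AddCommMonoid M] [LinearOrder M]
    [IsOrderedCancelAddMonoid M] (s : Finset ι) {f g : ι → ι → M}
    (h : ∀ i ∈ s, ∀ j ∈ s, f i j + f j i ≤ g i j + g j i) :
    ∑ i ∈ s, ∑ j ∈ s, f i j ≤ ∑ i ∈ s, ∑ j ∈ s, g i j := by
  have hsymm (f : ι → ι → M) :
      2 • ∑ i ∈ s, ∑ j ∈ s, f i j = ∑ i ∈ s, ∑ j ∈ s, (f i j + f j i) := by
    simp only [sum_add_distrib, two_nsmul, sum_comm (s := s) (t := s) (f := fun j i => f i j)]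
  refine le_of_nsmul_le_nsmul_right two_ne_zero ?_
  rw [hsymm, hsymm]
  exact sum_le_sum fun i hi => sum_le_sum fun j hj => h i hi j hj

namespace Real

theorem exp_add_exp_neg_le_of_abs_le_one {d : ℝ} (hd : |d| ≤ 1) :
    exp d + exp (-d) ≤ 2 + d ^ 2 + 5 / 48 * d ^ 4 := by
  have hpos := exp_bound hd (n := 4) (by norm_num)
  have hneg := exp_bound (x := -d) (by rwa [abs_neg]) (n := 4) (by norm_num)
  simp only [sum_range_succ, sum_range_zero, Nat.factorial, abs_neg] at hpos hneg
  have hd4 : |d| ^ 4 = d ^ 4 := by rw [pow_abs, abs_of_nonneg (by positivity)]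
  norm_num [hd4] at hpos hneg
  linarith [(abs_le.mp hpos).2, (abs_le.mp hneg).2]

theorem exp_add_exp_neg_le_two_add_mul_sq {L d : ℝ} (hL : 1.12 ≤ L) (hd : |d| ≤ 1 / L) :
    exp d + exp (-d) ≤ 2 + L * d ^ 2 := by
  have hL0 : 0 < L := by linarith
  have hdL : d ^ 2 * L ^ 2 ≤ 1 := by
    rw [le_div_iff₀ hL0] at hd
    simpa only [mul_pow, sq_abs] using pow_le_one₀ (n := 2) (by positivity) hd
  -- the Taylor remainder `5/48 d⁴ ≤ 5/(48 L²) d²` is absorbed by `(L - 1) d²` since `48 L² (L - 1) ≥ 5`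
  have hL48 : 5 ≤ 48 * L ^ 2 * (L - 1) := by nlinarith
  have hd1 : |d| ≤ 1 := hd.trans ((div_le_one hL0).mpr (by linarith))
  nlinarith [exp_add_exp_neg_le_of_abs_le_one hd1, mul_le_mul_of_nonneg_left hdL (sq_nonneg d),
    mul_le_mul_of_nonneg_left hL48 (sq_nonneg (d ^ 2))]


theorem exp_neg_mul_add_exp_mul_le {L d x y : ℝ} (hL : 1.12 ≤ L) (hd₀ : 0 ≤ d) (hd : d ≤ 1 / L)
    (hy : 0 ≤ y) (hyx : y ≤ x) :
    exp (-d) * x + exp d * y ≤ x + y + L * d ^ 2 * y := by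
  have hcosh := exp_add_exp_neg_le_two_add_mul_sq hL (by rwa [abs_of_nonneg hd₀])
  have hexp : exp (-d) ≤ 1 := exp_le_one_iff.mpr (by linarith)
  nlinarith [mul_nonneg (sub_nonneg.mpr hexp) (sub_nonneg.mpr hyx),
    mul_le_mul_of_nonneg_right hcosh hy]

theorem div_mul_add_div_mul_le {L a b x y : ℝ} (hL : 1.12 ≤ L) (hb : 0 < b) (hba : b ≤ a)
    (hab : log (a / b) ≤ 1 / L) (hy : 0 ≤ y) (hyx : y ≤ x) :
    b / a * x + a / b * y ≤ x + y + L * log (a / b) ^ 2 * y := by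
  have hab₀ : 0 < a / b := div_pos (hb.trans_le hba) hb
  have := exp_neg_mul_add_exp_mul_le hL (log_nonneg ((one_le_div hb).mpr hba)) hab hy hyx
  rwa [exp_neg, exp_log hab₀, inv_div] at this

theorem exp_neg_mul_one_add_le_one (x : ℝ) : exp (-x) * (1 + x) ≤ 1 := by
  rw [exp_neg, inv_mul_le_one₀ (exp_pos x), add_comm]
  exact add_one_le_exp x

end Real

section KernelInequality

variable {ι : Type*} [Fintype ι] [LinearOrder ι]

noncomputable def logSqDeviationBelow (g p : ι → ℝ) (i : ι) : ℝ :=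
  ∑ j ∈ univ.filter (fun j => j < i), log (g j / g i) ^ 2 * p j

variable {g p : ι → ℝ}

theorem logSqDeviationBelow_mono (hg : Antitone g) (hgpos : ∀ i, 0 < g i) (hp : ∀ i, 0 ≤ p i) :
    Monotone (logSqDeviationBelow g p) := by
  intro i j hij
  calc logSqDeviationBelow g p i
      ≤ ∑ k ∈ univ.filter (fun k => k < i), log (g k / g j) ^ 2 * p k := by
        refine sum_le_sum fun k hk => mul_le_mul_of_nonneg_right ?_ (hp k)
        have hki : k ≤ i := (mem_filter.mp hk).2.le
        refine pow_le_pow_left₀ (log_nonneg ((one_le_div (hgpos i)).mpr (hg hki))) ?_ 2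
        exact log_le_log (div_pos (hgpos k) (hgpos i))
          (div_le_div_of_nonneg_left (hgpos k).le (hgpos j) (hg hij))
    _ ≤ logSqDeviationBelow g p j := by
        refine sum_le_sum_of_subset_of_nonneg
          (monotone_filter_right _ fun k _ hk => hk.trans_le hij) fun k _ _ => ?_
        exact mul_nonneg (sq_nonneg _) (hp k)

theorem sum_div_mul_exp_mul_sum_mul_le_one (hg : Antitone g) (hgpos : ∀ i, 0 < g i)
    (hp : ∀ i, 0 ≤ p i) (hpsum : ∑ i, p i = 1) {L : ℝ} (hL : 1.12 ≤ L)
    (hspread : ∀ i j, i ≤ j → log (g i / g j) ≤ 1 / L) :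
    (∑ i, p i / g i * exp (-L * logSqDeviationBelow g p i)) * ∑ j, p j * g j ≤ 1 := by
  set F := fun i => exp (-L * logSqDeviationBelow g p i)
  have hF_anti : Antitone F := fun i j hij =>
    exp_le_exp.mpr (by nlinarith [logSqDeviationBelow_mono hg hgpos hp hij])
  set χ := fun i j => p i * F i * (p j + if j < i then L * log (g j / g i) ^ 2 * p j else 0)
  have hpair : ∀ i j, i ≤ j →
      p i / g i * F i * (p j * g j) + p j / g j * F j * (p i * g i) ≤ χ i j + χ j i := by
    intro i j hij
    rcases hij.eq_or_lt with rfl | hij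
    · simp only [χ, lt_irrefl, if_false, add_zero]
      field_simp [(hgpos i).ne']
      rfl
    have hbound := div_mul_add_div_mul_le hL (hgpos j) (hg hij.le) (hspread i j hij.le)
      (exp_pos _).le (hF_anti hij.le)
    simp only [χ, hij, hij.asymm, if_true, if_false, add_zero]
    have hgi := (hgpos i).ne'
    have hgj := (hgpos j).ne'
    calc p i / g i * F i * (p j * g j) + p j / g j * F j * (p i * g i)
        = p i * p j * (g j / g i * F i + g i / g j * F j) := by field_simp
      _ ≤ p i * p j * (F i + F j + L * log (g i / g j) ^ 2 * F j) :=
          mul_le_mul_of_nonneg_left hbound (mul_nonneg (hp i) (hp j))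
      _ = _ := by ring
  have hrow : ∀ i, ∑ j, χ i j ≤ p i := by
    intro i
    calc ∑ j, χ i j = p i * (F i * (1 + L * logSqDeviationBelow g p i)) := by
          simp only [χ, ← mul_sum, sum_add_distrib, hpsum, ← sum_filter, logSqDeviationBelow,
            mul_assoc]
      _ ≤ p i * 1 := mul_le_mul_of_nonneg_left
          (by simpa only [F, neg_mul] using exp_neg_mul_one_add_le_one _) (hp i)
      _ = p i := mul_one _
  calc (∑ i, p i / g i * F i) * ∑ j, p j * g j
      = ∑ i, ∑ j, p i / g i * F i * (p j * g j) := sum_mul_sum _ _ _ _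
    _ ≤ ∑ i, ∑ j, χ i j := sum_sum_le_sum_sum_of_add_swap_le _ fun i _ j _ =>
        (le_total i j).elim (hpair i j) fun hji => by simpa only [add_comm] using hpair j i hji
    _ ≤ ∑ i, p i := sum_le_sum fun i _ => hrow i
    _ = 1 := hpsum

end KernelInequality

/-- The kernel inequality specialized to the choice k_j^i = 2L·log(g_j/g_i). -/
theorem kernel_inequality_special (m : ℕ) (hm : 1 ≤ m) (g p : Fin m → ℝ)
    (hgmono : ∀ i j : Fin m, i ≤ j → g j ≤ g i)
    (hgpos : ∀ i, 0 < g i)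
    (hppos : ∀ i, 0 < p i)
    (hpsum : ∑ i, p i = 1)
    (L : ℝ) (hL : 1.12 ≤ L)
    (hlog : Real.log (g ⟨0, by omega⟩ / g ⟨m - 1, by omega⟩) ≤ 1 / L) :
    ∑ i, (p i / g i) *
        Real.exp (-L * ∑ j ∈ univ.filter (fun j => j < i),
          (Real.log (g j / g i)) ^ 2 * p j)
      ≤ 1 / ∑ i, p i * g i := by
  have hspread (i j : Fin m) (hij : i ≤ j) : log (g i / g j) ≤ 1 / L := by
    refine le_trans (log_le_log (div_pos (hgpos i) (hgpos j)) ?_) hlog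
    exact div_le_div₀ (hgpos _).le (hgmono _ i (Fin.mk_le_of_le_val (Nat.zero_le _)))
      (hgpos _) (hgmono j _ (Nat.le_sub_one_of_lt j.isLt))
  rw [le_div_iff₀ (sum_pos (fun i _ => mul_pos (hppos i) (hgpos i)) ⟨⟨0, by omega⟩, mem_univ _⟩)]
  exact sum_div_mul_exp_mul_sum_mul_le_one hgmono hgpos (fun i => (hppos i).le) hpsum hL hspread
end

section
/- Let L ≥ 1.12. For all p with 0 ≤ p ≤ 1 and all t with 0 ≤ t ≤ 1/L, one has (p·e^t + 1 − p) · exp( −(L/2)·p·(t² + 2t) ) ≤ 1; equivalently, exp( −L·p·(t² + 2t) ) ≤ ( 1/(p·e^t + 1 − p) )². -/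
lemma exp_poly_bound (t : ℝ) (ht0 : 0 ≤ t) (ht1 : t ≤ 25/28) :
    Real.exp t ≤ 1 + 1.12 * t + 0.56 * t ^ 2 := by
  have habs : |t| ≤ 1 := by rw [abs_of_nonneg ht0]; linarith
  have h := Real.exp_bound habs (n := 5) (by norm_num)
  rw [show (5:ℕ) = 4 + 1 from rfl, Finset.sum_range_succ, Finset.sum_range_succ,
    Finset.sum_range_succ, Finset.sum_range_succ, Finset.sum_range_succ] at h
  simp only [Finset.range_zero, Finset.sum_empty] at h
  rw [abs_of_nonneg ht0, abs_le] at h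
  norm_num [Nat.factorial] at h
  nlinarith [h.2, pow_nonneg ht0 2, pow_nonneg ht0 3, pow_nonneg ht0 5,
    mul_nonneg (mul_nonneg ht0 ht0) (sub_nonneg.2 ht1),
    mul_nonneg (mul_nonneg (mul_nonneg ht0 ht0) ht0) (sub_nonneg.2 ht1),
    mul_nonneg (mul_nonneg (sub_nonneg.2 ht1) (sub_nonneg.2 ht1)) ht0,
    mul_nonneg (mul_nonneg (mul_nonneg (sub_nonneg.2 ht1) (sub_nonneg.2 ht1)) ht0) ht0]

/-- For L ≥ 1.12, 0 ≤ p ≤ 1 and 0 ≤ t ≤ 1/L one has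
(p e^t + 1 − p) exp(−(L/2) p (t² + 2t)) ≤ 1, equivalently
exp(−L p (t² + 2t)) ≤ (1/(p e^t + 1 − p))². -/
theorem phi_le_one (L : ℝ) (hL : 1.12 ≤ L) (p t : ℝ)
    (hp0 : 0 ≤ p) (hp1 : p ≤ 1) (ht0 : 0 ≤ t) (ht1 : t ≤ 1 / L) :
    (p * Real.exp t + 1 - p) * Real.exp (-(L / 2) * p * (t ^ 2 + 2 * t)) ≤ 1 ∧
    Real.exp (-L * p * (t ^ 2 + 2 * t)) ≤ (1 / (p * Real.exp t + 1 - p)) ^ 2 := by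
  have hL0 : (0:ℝ) < L := by linarith
  have ht28 : t ≤ 25/28 := le_trans ht1 (by rw [div_le_div_iff₀ hL0 (by norm_num)]; linarith)
  have hexp1 : 1 ≤ Real.exp t := Real.one_le_exp ht0
  have hA1 : 1 ≤ p * Real.exp t + 1 - p := by nlinarith
  have hA0 : 0 < p * Real.exp t + 1 - p := by linarith
  -- key: e^t ≤ 1 + (L/2)(t²+2t)
  have hkey : Real.exp t - 1 ≤ L / 2 * (t ^ 2 + 2 * t) := by
    have := exp_poly_bound t ht0 ht28
    nlinarith [sq_nonneg t]
  -- A ≤ exp((L/2) p (t²+2t))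
  have hAe : p * Real.exp t + 1 - p ≤ Real.exp (L / 2 * p * (t ^ 2 + 2 * t)) := by
    have h1 : p * Real.exp t + 1 - p = 1 + p * (Real.exp t - 1) := by ring
    have h2 : 1 + p * (Real.exp t - 1) ≤ Real.exp (p * (Real.exp t - 1)) := by
      have := Real.add_one_le_exp (p * (Real.exp t - 1))
      linarith
    have h3 : p * (Real.exp t - 1) ≤ L / 2 * p * (t ^ 2 + 2 * t) := by
      calc p * (Real.exp t - 1) ≤ p * (L / 2 * (t ^ 2 + 2 * t)) :=
            mul_le_mul_of_nonneg_left hkey hp0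
        _ = L / 2 * p * (t ^ 2 + 2 * t) := by ring
    calc p * Real.exp t + 1 - p = 1 + p * (Real.exp t - 1) := h1
      _ ≤ Real.exp (p * (Real.exp t - 1)) := h2
      _ ≤ Real.exp (L / 2 * p * (t ^ 2 + 2 * t)) := Real.exp_le_exp.2 h3
  have hfirst : (p * Real.exp t + 1 - p) * Real.exp (-(L / 2) * p * (t ^ 2 + 2 * t)) ≤ 1 := by
    have hepos : 0 < Real.exp (-(L / 2) * p * (t ^ 2 + 2 * t)) := Real.exp_pos _
    calc (p * Real.exp t + 1 - p) * Real.exp (-(L / 2) * p * (t ^ 2 + 2 * t))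
        ≤ Real.exp (L / 2 * p * (t ^ 2 + 2 * t)) * Real.exp (-(L / 2) * p * (t ^ 2 + 2 * t)) :=
          mul_le_mul_of_nonneg_right hAe hepos.le
      _ = 1 := by rw [← Real.exp_add]; ring_nf; exact Real.exp_zero
  refine ⟨hfirst, ?_⟩
  have h2 : Real.exp (-(L / 2) * p * (t ^ 2 + 2 * t)) ≤ 1 / (p * Real.exp t + 1 - p) := by
    rw [le_div_iff₀ hA0]
    linarith [hfirst, mul_comm (p * Real.exp t + 1 - p) (Real.exp (-(L / 2) * p * (t ^ 2 + 2 * t)))]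
  have hsq := mul_le_mul h2 h2 (Real.exp_pos _).le (by positivity)
  calc Real.exp (-L * p * (t ^ 2 + 2 * t))
      = Real.exp (-(L / 2) * p * (t ^ 2 + 2 * t)) * Real.exp (-(L / 2) * p * (t ^ 2 + 2 * t)) := by
        rw [← Real.exp_add]; ring_nf
    _ ≤ (1 / (p * Real.exp t + 1 - p)) * (1 / (p * Real.exp t + 1 - p)) := hsq
    _ = (1 / (p * Real.exp t + 1 - p)) ^ 2 := (sq _).symm
end

section
/- Let L ≥ 1 and fix p with 0 ≤ p ≤ 1. Define φ(p,t) = (p·e^t + 1 − p)·exp( −(L/2)·p·(t² + 2t) ). Then the maximum of t ↦ φ(p,t) over the interval [0, 1/L] is attained at an endpoint, i.e. max_{0 ≤ t ≤ 1/L} φ(p,t) = max( φ(p,0), φ(p,1/L) ). -/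
/-!
Writing `E t = exp (-(L/2) p (t² + 2t))`, one computes `φ'(t) = -(p eᵗ E t) · F t` with
`F t = L (t + 1) (p + (1 - p) e⁻ᵗ) - 1`. Since `F'' t = -L (1 - p) (1 - t) e⁻ᵗ ≤ 0` on `[0, 1]`,
`F` is concave there, and `F 0 = L - 1 ≥ 0`. A concave function that is nonnegative at the left
end changes sign at most once, from `+` to `-`; hence on `[0, 1/L] ⊆ [0, 1]` the function `φ`
first decreases and then increases, so its maximum is attained at an endpoint.
-/

open Real Set

section MaximumPrinciple

variable {𝕜 β : Type*} [Field 𝕜] [LinearOrder 𝕜] [IsStrictOrderedRing 𝕜]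
  [AddCommGroup β] [LinearOrder β] [IsOrderedAddMonoid β] [Module 𝕜 β]
  [IsStrictOrderedModule 𝕜 β] {s : Set 𝕜} {f : 𝕜 → β} {x y z : 𝕜}

lemma ConcaveOn.nonneg_of_mem_Icc (hf : ConcaveOn 𝕜 s f) (hx : x ∈ s) (hy : y ∈ s)
    (hfx : 0 ≤ f x) (hfy : 0 ≤ f y) (hz : z ∈ Icc x y) : 0 ≤ f z :=
  (le_min hfx hfy).trans (hf.min_le_of_mem_Icc hx hy hz)

lemma ConcaveOn.neg_right_of_neg_of_mem_Icc (hf : ConcaveOn 𝕜 s f) (hx : x ∈ s) (hz : z ∈ s)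
    (hfx : 0 ≤ f x) (hfy : f y < 0) (hy : y ∈ Icc x z) : f z < 0 := by
  have := (hf.min_le_of_mem_Icc hx hz hy).trans_lt hfy
  rw [min_lt_iff] at this
  exact this.resolve_left hfx.not_gt

end MaximumPrinciple

section Phi

variable (L p : ℝ)

noncomputable def phi (t : ℝ) : ℝ :=
  (p * exp t + 1 - p) * exp (-(L / 2) * p * (t ^ 2 + 2 * t))

noncomputable def phiSignFactor (t : ℝ) : ℝ :=
  L * (t + 1) * (p + (1 - p) * exp (-t)) - 1

lemma phiSignFactor_zero : phiSignFactor L p 0 = L - 1 := by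
  simp [phiSignFactor]

lemma hasDerivAt_phi (t : ℝ) :
    HasDerivAt (phi L p)
      (-(p * exp t * exp (-(L / 2) * p * (t ^ 2 + 2 * t)) * phiSignFactor L p t)) t := by
  have hlin : HasDerivAt (fun s => p * exp s + 1 - p) (p * exp t) t := by
    simpa using (((hasDerivAt_exp t).const_mul p).add_const 1).sub_const p
  have hquad : HasDerivAt (fun s => -(L / 2) * p * (s ^ 2 + 2 * s))
      (-(L / 2) * p * (2 * t + 2)) t := by
    have : HasDerivAt (fun s : ℝ => s ^ 2 + 2 * s) (2 * t + 2) t := by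
      simpa using (hasDerivAt_pow 2 t).fun_add ((hasDerivAt_id t).const_mul 2)
    simpa using this.const_mul (-(L / 2) * p)
  refine (hlin.mul hquad.exp).congr_deriv ?_
  simp only [phiSignFactor, exp_neg]
  field_simp
  ring

lemma hasDerivAt_phiSignFactor (t : ℝ) :
    HasDerivAt (phiSignFactor L p) (L * (p - (1 - p) * t * exp (-t))) t := by
  have hexp : HasDerivAt (fun s => exp (-s)) (-exp (-t)) t := by
    simpa using (hasDerivAt_id t).neg.exp
  have hlin : HasDerivAt (fun s : ℝ => L * (s + 1)) L t := by
    simpa using ((hasDerivAt_id t).add_const 1).const_mul L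
  refine ((hlin.mul ((hexp.const_mul (1 - p)).const_add p)).sub_const 1).congr_deriv ?_
  ring

lemma hasDerivAt_phiSignFactor_deriv (t : ℝ) :
    HasDerivAt (fun s => L * (p - (1 - p) * s * exp (-s)))
      (-(L * (1 - p) * (1 - t) * exp (-t))) t := by
  have hexp : HasDerivAt (fun s => exp (-s)) (-exp (-t)) t := by
    simpa using (hasDerivAt_id t).neg.exp
  refine ((((hasDerivAt_id t).const_mul (1 - p)).mul hexp).const_sub p).const_mul L
    |>.congr_deriv ?_
  simp only [id_eq]
  ring

lemma concaveOn_phiSignFactor (hL : 0 ≤ L) (hp : p ≤ 1) :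
    ConcaveOn ℝ (Icc 0 1) (phiSignFactor L p) := by
  refine concaveOn_of_hasDerivWithinAt2_nonpos (convex_Icc 0 1)
    (fun t _ => (hasDerivAt_phiSignFactor L p t).continuousAt.continuousWithinAt)
    (fun t _ => (hasDerivAt_phiSignFactor L p t).hasDerivWithinAt)
    (fun t _ => (hasDerivAt_phiSignFactor_deriv L p t).hasDerivWithinAt) ?_
  intro t ht
  rw [interior_Icc] at ht
  have : 0 ≤ L * (1 - p) * (1 - t) * exp (-t) := by
    have := ht.2.le
    have : 0 ≤ 1 - p := by linarith
    positivity
  linarith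

variable {L p}

lemma antitoneOn_phi (hp : 0 ≤ p) {a b : ℝ} (hF : ∀ t ∈ Icc a b, 0 ≤ phiSignFactor L p t) :
    AntitoneOn (phi L p) (Icc a b) := by
  refine antitoneOn_of_hasDerivWithinAt_nonpos (convex_Icc a b)
    (fun t _ => (hasDerivAt_phi L p t).continuousAt.continuousWithinAt)
    (fun t _ => (hasDerivAt_phi L p t).hasDerivWithinAt) fun t ht => ?_
  rw [interior_Icc] at ht
  have := hF t (Ioo_subset_Icc_self ht)
  rw [neg_nonpos]
  positivity

lemma monotoneOn_phi (hp : 0 ≤ p) {a b : ℝ} (hF : ∀ t ∈ Icc a b, phiSignFactor L p t ≤ 0) :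
    MonotoneOn (phi L p) (Icc a b) := by
  refine monotoneOn_of_hasDerivWithinAt_nonneg (convex_Icc a b)
    (fun t _ => (hasDerivAt_phi L p t).continuousAt.continuousWithinAt)
    (fun t _ => (hasDerivAt_phi L p t).hasDerivWithinAt) fun t ht => ?_
  rw [interior_Icc] at ht
  rw [neg_nonneg]
  exact mul_nonpos_of_nonneg_of_nonpos (by positivity) (hF t (Ioo_subset_Icc_self ht))

end Phi

/-- For L ≥ 1 and fixed p ∈ [0,1], the maximum of
t ↦ φ(p,t) = (p e^t + 1 − p) exp(−(L/2) p (t² + 2t)) over [0, 1/L]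
is attained at an endpoint. -/
theorem phi_max_at_endpoint (L : ℝ) (hL : 1 ≤ L) (p : ℝ) (hp0 : 0 ≤ p) (hp1 : p ≤ 1) :
    ∀ t ∈ Set.Icc (0 : ℝ) (1 / L),
      (p * Real.exp t + 1 - p) * Real.exp (-(L / 2) * p * (t ^ 2 + 2 * t)) ≤
        max ((p * Real.exp 0 + 1 - p) * Real.exp (-(L / 2) * p * ((0 : ℝ) ^ 2 + 2 * 0)))
          ((p * Real.exp (1 / L) + 1 - p) *
            Real.exp (-(L / 2) * p * ((1 / L) ^ 2 + 2 * (1 / L)))) := by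
  rintro t ⟨ht0, htL⟩
  show phi L p t ≤ max (phi L p 0) (phi L p (1 / L))
  have hL1 : 1 / L ≤ 1 := (div_le_one (by linarith)).mpr hL
  have hconc := (concaveOn_phiSignFactor L p (by linarith) hp1).subset
    (Icc_subset_Icc_right hL1) (convex_Icc 0 (1 / L))
  have hF0 : 0 ≤ phiSignFactor L p 0 := by rw [phiSignFactor_zero]; linarith
  have h0 : (0 : ℝ) ∈ Icc 0 (1 / L) := ⟨le_rfl, ht0.trans htL⟩
  rcases le_or_gt 0 (phiSignFactor L p t) with hFt | hFt
  · have hanti := antitoneOn_phi hp0 fun s hs =>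
      hconc.nonneg_of_mem_Icc h0 ⟨ht0, htL⟩ hF0 hFt hs
    exact (hanti ⟨le_rfl, ht0⟩ ⟨ht0, le_rfl⟩ ht0).trans (le_max_left _ _)
  · have hmono := monotoneOn_phi hp0 fun s hs =>
      (hconc.neg_right_of_neg_of_mem_Icc h0 ⟨ht0.trans hs.1, hs.2⟩ hF0 hFt ⟨ht0, hs.1⟩).le
    exact (hmono ⟨le_rfl, htL⟩ ⟨htL, le_rfl⟩ htL).trans (le_max_right _ _)
end

section
/- Let L ≥ 1.12. The function p ↦ (p·e^{1/L} + 1 − p) · exp( −(p/2)·(1/L + 2) ) is nonincreasing on [0,1]; in particular, since its value at p = 0 equals 1, it is at most 1 for all p ∈ [0,1]. -/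
/-!
Put `x = 1 / L ∈ (0, 25/28]`. The function is `p ↦ (1 + a p) e^{-c p}` with `a = e^x - 1` and
`c = 1 + x/2`; its derivative `e^{-c p} (a - c - a c p)` is nonpositive for `p ≥ 0` as soon as
`a ≤ c`, i.e. `e^x ≤ 2 + x/2`. On `[0, 25/28]` this follows from
`e^x (1 + 25/28 - x) ≤ e^{25/28} ≤ 2.4456 ≤ (2 + x/2)(1 + 25/28 - x)`.
-/

open Real Set

theorem antitoneOn_one_add_mul_mul_exp_neg_mul {a c : ℝ} (ha : 0 ≤ a) (hac : a ≤ c) :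
    AntitoneOn (fun p => (1 + a * p) * exp (-(c * p))) (Ici 0) := by
  have hderiv : ∀ p, HasDerivAt (fun p => (1 + a * p) * exp (-(c * p)))
      (exp (-(c * p)) * (a - c - a * c * p)) p := by
    intro p
    have hlin : HasDerivAt (fun p => 1 + a * p) a p := by
      simpa using ((hasDerivAt_id p).const_mul a).const_add 1
    have hexp : HasDerivAt (fun p => -(c * p)) (-c) p := by
      simpa using (hasDerivAt_id p).const_mul (-c)
    exact (hlin.mul hexp.exp).congr_deriv (by ring)
  refine antitoneOn_of_deriv_nonpos (convex_Ici 0) (by fun_prop) (by fun_prop) fun p hp => ?_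
  rw [interior_Ici] at hp
  rw [(hderiv p).deriv]
  have hacp : 0 ≤ a * c * p := mul_nonneg (mul_nonneg ha (ha.trans hac)) hp.out.le
  exact mul_nonpos_of_nonneg_of_nonpos (exp_pos _).le (by linarith)

-- `e^{25/28} = e / e^{3/112 · 4} ≤ e / (1 + 3/112)^4`.
theorem exp_25_div_28_le : exp (25 / 28) ≤ 2.4456 := by
  have hsplit : exp (25 / 28) * exp (3 / 112) ^ 4 = exp 1 := by
    rw [← exp_nat_mul, ← exp_add]; norm_num
  have hpow : (115 / 112 : ℝ) ^ 4 ≤ exp (3 / 112) ^ 4 := by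
    gcongr
    linarith [add_one_le_exp (3 / 112 : ℝ)]
  nlinarith [exp_one_lt_d9, exp_pos (25 / 28)]

theorem exp_le_two_add_half {x : ℝ} (hx0 : 0 ≤ x) (hx : x ≤ 25 / 28) : exp x ≤ 2 + x / 2 := by
  have hlower : 1 + (25 / 28 - x) ≤ exp (25 / 28 - x) := by linarith [add_one_le_exp (25 / 28 - x)]
  have hprod : exp x * (1 + (25 / 28 - x)) ≤ 2.4456 :=
    calc exp x * (1 + (25 / 28 - x)) ≤ exp x * exp (25 / 28 - x) := by gcongr
      _ = exp (25 / 28) := by rw [← exp_add]; ring_nf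
      _ ≤ 2.4456 := exp_25_div_28_le
  have hquad : 2.4456 ≤ (2 + x / 2) * (1 + (25 / 28 - x)) := by nlinarith
  exact le_of_mul_le_mul_right (hprod.trans hquad) (by linarith)

/-- For L ≥ 1.12 the function p ↦ (p e^{1/L} + 1 − p) exp(−(p/2)(1/L + 2)) is
nonincreasing on [0,1], and hence at most 1 there (its value at p = 0 is 1). -/
theorem phi_at_right_endpoint_antitone (L : ℝ) (hL : 1.12 ≤ L) :
    AntitoneOn
      (fun p : ℝ => (p * Real.exp (1 / L) + 1 - p) * Real.exp (-(p / 2) * (1 / L + 2)))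
      (Set.Icc 0 1) ∧
    ∀ p ∈ Set.Icc (0 : ℝ) 1,
      (p * Real.exp (1 / L) + 1 - p) * Real.exp (-(p / 2) * (1 / L + 2)) ≤ 1 := by
  have hx0 : 0 ≤ 1 / L := by positivity
  have hx : 1 / L ≤ 25 / 28 := by
    rw [div_le_div_iff₀ (by linarith) (by norm_num)]; linarith
  have hanti : AntitoneOn
      (fun p : ℝ => (p * exp (1 / L) + 1 - p) * exp (-(p / 2) * (1 / L + 2))) (Icc 0 1) := by
    have h := antitoneOn_one_add_mul_mul_exp_neg_mul (a := exp (1 / L) - 1) (c := (1 / L + 2) / 2)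
      (by linarith [one_le_exp hx0]) (by linarith [exp_le_two_add_half hx0 hx])
    convert h.mono Icc_subset_Ici_self using 2 with p
    rw [show -(p / 2) * (1 / L + 2) = -((1 / L + 2) / 2 * p) by ring]
    ring
  refine ⟨hanti, fun p hp => ?_⟩
  simpa using hanti (left_mem_Icc.2 zero_le_one) hp hp.1
end

section
/- Let a ∈ ℝ be such that the set A = { x ∈ Ωⁿ : Z(x) ≤ a } is nonempty. Then for every x ∈ Ωⁿ and every δ ≥ 1, Z(x) ≤ a + σ²/δ + δ·m(A,x). -/
open Finset

/-- m(ν,x) = Σ_{i≤n} Σ_{ω∈Ω} ψ(d_i(ω)) μ({ω}), where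
d_i(ω) = ν({y : y_i = ω ∧ y_i ≠ x_i}) / μ({ω}). -/
noncomputable def mNu {Ω : Type*} [Fintype Ω] [DecidableEq Ω] {n : ℕ}
    (μ : Ω → ℝ) (ν : (Fin n → Ω) → ℝ) (x : Fin n → Ω) : ℝ :=
  ∑ i : Fin n, ∑ ω : Ω,
    psi ((∑ y ∈ univ.filter (fun y : Fin n → Ω => y i = ω ∧ y i ≠ x i), ν y) / μ ω) * μ ω

/-- m(A,x) = inf { m(ν,x) : ν a probability measure on Ωⁿ with ν(A) = 1 }. -/
noncomputable def mA {Ω : Type*} [Fintype Ω] [DecidableEq Ω] {n : ℕ}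
    (μ : Ω → ℝ) (A : Finset (Fin n → Ω)) (x : Fin n → Ω) : ℝ :=
  sInf { r : ℝ | ∃ ν : (Fin n → Ω) → ℝ,
    (∀ y, 0 ≤ ν y) ∧ (∑ y, ν y = 1) ∧ (∑ y ∈ A, ν y = 1) ∧ r = mNu μ ν x }

/-!
Fix a probability `ν` carried by `A` and some `f ∈ F`. Averaging over `y ∼ ν` splits
`∑ᵢ (μf - f xᵢ)` into `E_ν ∑ᵢ (μf - f yᵢ)`, which is at most `a` because `ν` lives on `{Z ≤ a}`,
plus `E_ν ∑ᵢ (f yᵢ - f xᵢ) ≤ ∑ᵢ ∑_ω μ ω · dᵢ ω · f ω`, where only coordinates with `yᵢ ≠ xᵢ`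
contribute. Young's inequality `f d ≤ f² / δ + δ ψ(d)` bounds the latter by `σ² / δ + δ m(ν, x)`;
it remains to take the supremum over `f` and the infimum over `ν`.
-/

/-- Young's inequality for `ψ`, whose convex conjugate is `t ↦ t ^ 2` on `t ≤ 1`. -/
lemma mul_le_sq_add_psi {t : ℝ} (ht : t ≤ 1) (d : ℝ) : t * d ≤ t ^ 2 + psi d := by
  unfold psi
  split_ifs with hd
  · nlinarith [sq_nonneg (t - d / 2)]
  · nlinarith

lemma mul_le_sq_mul_div_add_mul_psi {c s m δ : ℝ} (hc : c ≤ δ) (hδ : 0 < δ) (hm : 0 < m) :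
    c * s ≤ c ^ 2 * m / δ + δ * (psi (s / m) * m) := by
  have h := mul_le_mul_of_nonneg_right (mul_le_sq_add_psi ((div_le_one hδ).2 hc) (s / m))
    (mul_pos hδ hm).le
  have e₁ : c / δ * (s / m) * (δ * m) = c * s := by field_simp
  have e₂ : ((c / δ) ^ 2 + psi (s / m)) * (δ * m) = c ^ 2 * m / δ + δ * (psi (s / m) * m) := by
    field_simp
  rwa [e₁, e₂] at h

lemma sum_mul_le_of_forall_mem_le {α : Type*} [Fintype α] {ν g : α → ℝ} {A : Finset α} {a : ℝ}
    (hν : ∀ y, 0 ≤ ν y) (hν₁ : ∑ y, ν y = 1) (hνA : ∑ y ∈ A, ν y = 1)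
    (hg : ∀ y ∈ A, g y ≤ a) : ∑ y, ν y * g y ≤ a := by
  classical
  have hνA' : ∀ y ∉ A, ν y = 0 := by
    have h := sum_sdiff (f := ν) (subset_univ A)
    rw [hν₁, hνA, add_eq_right] at h
    exact fun y hy => (sum_eq_zero_iff_of_nonneg fun z _ => hν z).1 h y (by simpa using hy)
  calc ∑ y, ν y * g y = ∑ y ∈ A, ν y * g y :=
        (sum_subset (subset_univ A) fun y _ hy => by rw [hνA' y hy, zero_mul]).symm
    _ ≤ ∑ y ∈ A, ν y * a := sum_le_sum fun y hy => mul_le_mul_of_nonneg_left (hg y hy) (hν y)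
    _ = a := by rw [← sum_mul, hνA, one_mul]

section

variable {Ω : Type*} [Fintype Ω] [DecidableEq Ω] {n : ℕ}

/-- `d_i(ω) = movedMass ν x i ω / μ ω` in the notation of `mNu`. -/
def movedMass (ν : (Fin n → Ω) → ℝ) (x : Fin n → Ω) (i : Fin n) (ω : Ω) : ℝ :=
  ∑ y ∈ univ.filter (fun y : Fin n → Ω => y i = ω ∧ y i ≠ x i), ν y

lemma mNu_eq_sum_movedMass (μ : Ω → ℝ) (ν : (Fin n → Ω) → ℝ) (x : Fin n → Ω) :
    mNu μ ν x = ∑ i, ∑ ω, psi (movedMass ν x i ω / μ ω) * μ ω := rfl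

lemma movedMass_nonneg {ν : (Fin n → Ω) → ℝ} (hν : ∀ y, 0 ≤ ν y) (x : Fin n → Ω) (i : Fin n)
    (ω : Ω) : 0 ≤ movedMass ν x i ω :=
  sum_nonneg fun y _ => hν y

lemma sum_mul_sub_eq_sum_movedMass_mul (ν : (Fin n → Ω) → ℝ) (x : Fin n → Ω) (i : Fin n)
    (g : Ω → ℝ) :
    ∑ y, ν y * (g (y i) - g (x i)) = ∑ ω, movedMass ν x i ω * (g ω - g (x i)) := by
  rw [← sum_fiberwise univ (fun y => y i)]
  refine sum_congr rfl fun ω _ => ?_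
  rw [movedMass, sum_mul, ← filter_filter]
  conv_rhs => rw [sum_filter]
  refine sum_congr rfl fun y hy => ?_
  rw [(mem_filter.1 hy).2]
  split_ifs with h
  · rfl
  · rw [not_not.1 h, sub_self, mul_zero]

lemma sum_mul_sum_sub_le {μ : Ω → ℝ} (hμ : ∀ ω, 0 < μ ω) {ν : (Fin n → Ω) → ℝ}
    (hν : ∀ y, 0 ≤ ν y) {f : Ω → ℝ} {δ : ℝ} (hf₀ : ∀ ω, 0 ≤ f ω) (hfδ : ∀ ω, f ω ≤ δ)
    (hδ : 0 < δ) (x : Fin n → Ω) :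
    ∑ y, ν y * ∑ i, (f (y i) - f (x i)) ≤ n * (∑ ω, f ω ^ 2 * μ ω) / δ + δ * mNu μ ν x := by
  calc ∑ y, ν y * ∑ i, (f (y i) - f (x i))
      = ∑ i, ∑ ω, movedMass ν x i ω * (f ω - f (x i)) := by
        simp_rw [mul_sum]
        rw [sum_comm]
        exact sum_congr rfl fun i _ => sum_mul_sub_eq_sum_movedMass_mul ν x i f
    _ ≤ ∑ i : Fin n, ∑ ω, (f ω ^ 2 * μ ω / δ + δ * (psi (movedMass ν x i ω / μ ω) * μ ω)) := by
        gcongr with i _ ω _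
        calc movedMass ν x i ω * (f ω - f (x i)) ≤ f ω * movedMass ν x i ω := by
              nlinarith [movedMass_nonneg hν x i ω, hf₀ (x i)]
          _ ≤ _ := mul_le_sq_mul_div_add_mul_psi (hfδ ω) hδ (hμ ω)
    _ = n * (∑ ω, f ω ^ 2 * μ ω) / δ + δ * mNu μ ν x := by
        simp only [sum_add_distrib, ← sum_div, ← mul_sum, sum_const, card_univ, Fintype.card_fin,
          nsmul_eq_mul, mNu_eq_sum_movedMass]

lemma sum_sub_le_of_forall_mem_le {μ : Ω → ℝ} (hμ : ∀ ω, 0 < μ ω) {ν : (Fin n → Ω) → ℝ}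
    (hν : ∀ y, 0 ≤ ν y) (hν₁ : ∑ y, ν y = 1) {A : Finset (Fin n → Ω)} (hνA : ∑ y ∈ A, ν y = 1)
    {f : Ω → ℝ} (hf : ∀ ω, f ω ∈ Set.Icc (0 : ℝ) 1) {a : ℝ}
    (hA : ∀ y ∈ A, ∑ i, ((∑ ω, f ω * μ ω) - f (y i)) ≤ a) {δ : ℝ} (hδ : 1 ≤ δ) (x : Fin n → Ω) :
    ∑ i, ((∑ ω, f ω * μ ω) - f (x i)) ≤ a + n * (∑ ω, f ω ^ 2 * μ ω) / δ + δ * mNu μ ν x := by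
  have hsplit : ∑ i, ((∑ ω, f ω * μ ω) - f (x i)) =
      ∑ y, ν y * ∑ i, ((∑ ω, f ω * μ ω) - f (y i)) + ∑ y, ν y * ∑ i, (f (y i) - f (x i)) := by
    simp_rw [← sum_add_distrib, ← mul_add, ← sum_add_distrib, sub_add_sub_cancel, ← sum_mul, hν₁,
      one_mul]
  rw [hsplit, add_assoc]
  exact add_le_add (sum_mul_le_of_forall_mem_le hν hν₁ hνA hA)
    (sum_mul_sum_sub_le hμ hν (fun ω => (hf ω).1) (fun ω => (hf ω).2.trans hδ)
      (zero_lt_one.trans_le hδ) x)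

lemma le_mA {μ : Ω → ℝ} {A : Finset (Fin n → Ω)} (hA : A.Nonempty) {x : Fin n → Ω} {c : ℝ}
    (h : ∀ ν : (Fin n → Ω) → ℝ, (∀ y, 0 ≤ ν y) → ∑ y, ν y = 1 → ∑ y ∈ A, ν y = 1 →
      c ≤ mNu μ ν x) :
    c ≤ mA μ A x := by
  obtain ⟨y₀, hy₀⟩ := hA
  refine le_csInf ⟨_, Pi.single y₀ (1 : ℝ), ?_, ?_, ?_, rfl⟩ ?_
  · intro y
    rw [Pi.single_apply]
    split_ifs <;> norm_num
  · simp
  · simp [hy₀]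
  · rintro r ⟨ν, hν, hν₁, hνA, rfl⟩
    exact h ν hν hν₁ hνA

end

theorem Z_le_of_mA_general {Ω : Type*} [Fintype Ω] [DecidableEq Ω]
    (μ : Ω → ℝ) (hμpos : ∀ ω, 0 < μ ω)
    (n : ℕ) (F : Finset (Ω → ℝ)) (hF : F.Nonempty)
    (hrange : ∀ f ∈ F, ∀ ω, f ω ∈ Set.Icc (0 : ℝ) 1)
    (Z : (Fin n → Ω) → ℝ)
    (hZ : ∀ x, Z x = F.sup' hF (fun f => ∑ i : Fin n, ((∑ ω, f ω * μ ω) - f (x i))))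
    (σ2 : ℝ) (hσ2 : σ2 = n * F.sup' hF (fun f => ∑ ω, f ω ^ 2 * μ ω))
    (a : ℝ) (A : Finset (Fin n → Ω)) (hAdef : A = univ.filter (fun x => Z x ≤ a))
    (hAne : A.Nonempty)
    (x : Fin n → Ω) (δ : ℝ) (hδ : 1 ≤ δ) :
    Z x ≤ a + σ2 / δ + δ * mA μ A x := by
  have hδ₀ : 0 < δ := by linarith
  have hZν : ∀ ν : (Fin n → Ω) → ℝ, (∀ y, 0 ≤ ν y) → ∑ y, ν y = 1 → ∑ y ∈ A, ν y = 1 →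
      Z x ≤ a + σ2 / δ + δ * mNu μ ν x := by
    intro ν hν hν₁ hνA
    rw [hZ]
    refine sup'_le _ _ fun f hf => ?_
    have hA : ∀ y ∈ A, ∑ i, ((∑ ω, f ω * μ ω) - f (y i)) ≤ a := fun y hy =>
      (hZ y ▸ le_sup' _ hf).trans (by simpa [hAdef] using hy)
    have hσ : n * (∑ ω, f ω ^ 2 * μ ω) ≤ σ2 :=
      hσ2 ▸ mul_le_mul_of_nonneg_left (le_sup' (fun f => ∑ ω, f ω ^ 2 * μ ω) hf) n.cast_nonneg
    exact (sum_sub_le_of_forall_mem_le hμpos hν hν₁ hνA (hrange f hf) hA hδ x).trans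
      (by gcongr)
  have hm : (Z x - a - σ2 / δ) / δ ≤ mA μ A x := le_mA hAne fun ν hν hν₁ hνA => by
    rw [div_le_iff₀' hδ₀, sub_sub, sub_le_iff_le_add']
    exact hZν ν hν hν₁ hνA
  rw [div_le_iff₀' hδ₀, sub_sub, sub_le_iff_le_add'] at hm
  exact hm

/-- If A = {Z ≤ a} is nonempty then for every x and every δ ≥ 1,
Z(x) ≤ a + σ²/δ + δ·m(A,x). -/
theorem Z_le_of_mA {Ω : Type*} [Fintype Ω] [DecidableEq Ω] [Nonempty Ω]
    (μ : Ω → ℝ) (hμpos : ∀ ω, 0 < μ ω) (hμsum : ∑ ω, μ ω = 1)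
    (n : ℕ) (F : Finset (Ω → ℝ)) (hF : F.Nonempty)
    (hrange : ∀ f ∈ F, ∀ ω, f ω ∈ Set.Icc (0 : ℝ) 1)
    (Z : (Fin n → Ω) → ℝ)
    (hZ : ∀ x, Z x = F.sup' hF (fun f => ∑ i : Fin n, ((∑ ω, f ω * μ ω) - f (x i))))
    (σ2 : ℝ) (hσ2 : σ2 = n * F.sup' hF (fun f => ∑ ω, f ω ^ 2 * μ ω))
    (a : ℝ) (A : Finset (Fin n → Ω)) (hAdef : A = univ.filter (fun x => Z x ≤ a))
    (hAne : A.Nonempty)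
    (x : Fin n → Ω) (δ : ℝ) (hδ : 1 ≤ δ) :
    Z x ≤ a + σ2 / δ + δ * mA μ A x :=
  Z_le_of_mA_general μ hμpos n F hF hrange Z hZ σ2 hσ2 a A hAdef hAne x δ hδ
end

section
/- Let L = 1.12 and let M be a median of Z under P. Then for every u > 0, P( Z ≤ M − 2·max( L·u, σ·√(L·u) ) ) ≤ 2·e^{−u}. -/
/-!
Write `v = sup_f μ(f²)` and `κ = 31/28`. For `0 ≤ t ≤ 1` the two-sided exponential moment bound
`E e^{tZ} · E e^{-tZ} ≤ exp (n κ t² v)` holds. Combined with Chernoff bounds at the levels `M - s`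
and `M`, and with `P(Z ≥ M) ≥ 1/2`, it gives `P(Z ≤ M - s) ≤ 2 exp (κ t² σ² - t s)`, and a suitable
`t` brings the exponent down to `-(2 - κ) L u = -u`.

The moment bound tensorises. Conditioning on the first coordinate `ω`, let `P ω = E[e^{tZ} | ω]`;
by induction `E[e^{-tZ} | ω] ≤ K / P ω`, so it suffices that `E P · E P⁻¹ ≤ exp (κ t² v)`. Now
`q e^{-t m ω} ≤ P ω ≤ q`, where `m` is the average of maximisers of the supremum under exponentially
tilted weights (Jensen), so that `μ(m²) ≤ v`; and `a b ≤ e^{a + b - 2}` together with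
`r + r⁻¹ - 2 ≤ e^x + e^{-x} - 2 ≤ κ x²` for `e^{-x} ≤ r ≤ 1`, `|x| ≤ 1`, finishes the step.
-/

open Finset Real

theorem exp_add_exp_neg_sub_two_le {x : ℝ} (hx : |x| ≤ 1) :
    exp x + exp (-x) - 2 ≤ 31 / 28 * x ^ 2 := by
  have hpos := exp_bound hx (n := 4) (by norm_num)
  have hneg := exp_bound (x := -x) (by rwa [abs_neg]) (n := 4) (by norm_num)
  simp only [sum_range_succ, sum_range_zero, abs_neg, Nat.factorial] at hpos hneg
  have hx4 : |x| ^ 4 ≤ x ^ 2 := by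
    rw [show |x| ^ 4 = x ^ 2 * |x| ^ 2 by rw [← sq_abs x]; ring]
    exact mul_le_of_le_one_right (sq_nonneg x) (pow_le_one₀ (abs_nonneg x) hx)
  norm_num at hpos hneg
  linarith [(abs_le.1 hpos).2, (abs_le.1 hneg).2, show (-x) ^ 3 = -x ^ 3 by ring, sq_nonneg x]

theorem add_inv_sub_two_le_of_exp_neg_le {r x : ℝ} (hr : exp (-x) ≤ r) (hr1 : r ≤ 1) :
    r + r⁻¹ - 2 ≤ exp x + exp (-x) - 2 := by
  have hr0 : 0 < r := (exp_pos _).trans_le hr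
  have key : r + r⁻¹ - 2 = (1 - r) ^ 2 / r := by field_simp; ring
  have key' : exp x + exp (-x) - 2 = (1 - exp (-x)) ^ 2 / exp (-x) := by
    rw [exp_neg]; field_simp; ring
  rw [key, key']
  gcongr

theorem mul_le_exp_add_sub_two {a b : ℝ} (hb : 0 ≤ b) :
    a * b ≤ exp (a + b - 2) := by
  calc a * b ≤ exp (a - 1) * exp (b - 1) := by
        gcongr <;> linarith [add_one_le_exp (a - 1), add_one_le_exp (b - 1)]
    _ = exp (a + b - 2) := by rw [← exp_add]; ring_nf

theorem sum_mul_mul_sum_mul_inv_le {ι : Type*} [Fintype ι] {μ P x : ι → ℝ} {q : ℝ}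
    (hμ : ∀ i, 0 ≤ μ i) (hμsum : ∑ i, μ i = 1) (hq : 0 < q) (hx : ∀ i, |x i| ≤ 1)
    (hP : ∀ i, P i ≤ q) (hP' : ∀ i, q * exp (-x i) ≤ P i) :
    (∑ i, μ i * P i) * (∑ i, μ i * (P i)⁻¹) ≤ exp (31 / 28 * ∑ i, μ i * x i ^ 2) := by
  set r : ι → ℝ := fun i => P i / q
  have hr : ∀ i, exp (-x i) ≤ r i := fun i => (le_div_iff₀ hq).2 (by linarith [hP' i])
  have hr1 : ∀ i, r i ≤ 1 := fun i => (div_le_one hq).2 (hP i)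
  have hr0 : ∀ i, 0 ≤ r i := fun i => (exp_pos _).le.trans (hr i)
  calc (∑ i, μ i * P i) * (∑ i, μ i * (P i)⁻¹)
      = (∑ i, μ i * r i) * (∑ i, μ i * (r i)⁻¹) := by
        have hA : ∑ i, μ i * r i = q⁻¹ * ∑ i, μ i * P i := by
          rw [mul_sum]; exact sum_congr rfl fun i _ => by simp only [r]; ring
        have hB : ∑ i, μ i * (r i)⁻¹ = q * ∑ i, μ i * (P i)⁻¹ := by
          rw [mul_sum]; exact sum_congr rfl fun i _ => by simp only [r, inv_div]; ring
        rw [hA, hB]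
        field_simp
    _ ≤ exp (∑ i, μ i * (r i + (r i)⁻¹ - 2)) := by
        convert mul_le_exp_add_sub_two
          (sum_nonneg fun i _ => mul_nonneg (hμ i) (inv_nonneg.2 (hr0 i))) using 2
        simp only [mul_sub, mul_add, sum_add_distrib, sum_sub_distrib, ← sum_mul, hμsum]
        ring
    _ ≤ exp (31 / 28 * ∑ i, μ i * x i ^ 2) := by
        refine exp_le_exp.2 ?_
        rw [mul_sum]
        refine sum_le_sum fun i _ => ?_
        rw [mul_left_comm]
        exact mul_le_mul_of_nonneg_left ((add_inv_sub_two_le_of_exp_neg_le (hr i) (hr1 i)).trans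
          (exp_add_exp_neg_sub_two_le (hx i))) (hμ i)

section Tilt

variable {Y : Type*} [Fintype Y]

noncomputable def expTilt (w b : Y → ℝ) (y : Y) : ℝ := w y * exp (b y) / ∑ z, w z * exp (b z)

theorem expTilt_nonneg {w : Y → ℝ} (hw : ∀ y, 0 ≤ w y) (b : Y → ℝ) (y : Y) :
    0 ≤ expTilt w b y :=
  div_nonneg (mul_nonneg (hw y) (exp_pos _).le)
    (sum_nonneg fun z _ => mul_nonneg (hw z) (exp_pos _).le)

theorem sum_expTilt {w b : Y → ℝ} (h : ∑ z, w z * exp (b z) ≠ 0) : ∑ y, expTilt w b y = 1 := by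
  simp only [expTilt, ← sum_div, div_self h]

theorem mul_exp_neg_sum_expTilt_mul_le {w b : Y → ℝ} (hw : ∀ y, 0 ≤ w y)
    (hpos : 0 < ∑ z, w z * exp (b z)) (h : Y → ℝ) :
    (∑ y, w y * exp (b y)) * exp (-∑ y, expTilt w b y * h y) ≤ ∑ y, w y * exp (b y - h y) := by
  have jensen : exp (∑ y, expTilt w b y • -h y) ≤ ∑ y, expTilt w b y • exp (-h y) :=
    convexOn_exp.map_sum_le (fun y _ => expTilt_nonneg hw b y) (sum_expTilt hpos.ne')
      fun y _ => Set.mem_univ _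
  simp only [smul_eq_mul, mul_neg, sum_neg_distrib] at jensen
  calc (∑ y, w y * exp (b y)) * exp (-∑ y, expTilt w b y * h y)
      ≤ (∑ y, w y * exp (b y)) * ∑ y, expTilt w b y * exp (-h y) := by gcongr
    _ = ∑ y, w y * exp (b y - h y) := by
        rw [mul_sum]
        refine sum_congr rfl fun y _ => ?_
        rw [expTilt, sub_eq_add_neg, exp_add]
        field_simp

end Tilt

theorem sum_mul_sum_mul_sq_le {Ω Y : Type*} [Fintype Ω] [Fintype Y] {μ : Ω → ℝ} {ρ : Y → ℝ}
    {g : Y → Ω → ℝ} {v : ℝ} (hμ : ∀ ω, 0 ≤ μ ω) (hρ : ∀ y, 0 ≤ ρ y) (hρsum : ∑ y, ρ y = 1)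
    (hg : ∀ y, ∑ ω, g y ω ^ 2 * μ ω ≤ v) :
    ∑ ω, μ ω * (∑ y, ρ y * g y ω) ^ 2 ≤ v := by
  have jensen : ∀ ω, (∑ y, ρ y * g y ω) ^ 2 ≤ ∑ y, ρ y * g y ω ^ 2 := fun ω => by
    simpa only [smul_eq_mul] using (Even.convexOn_pow even_two).map_sum_le
      (fun y _ => hρ y) hρsum fun y _ => Set.mem_univ (g y ω)
  calc ∑ ω, μ ω * (∑ y, ρ y * g y ω) ^ 2 ≤ ∑ ω, μ ω * ∑ y, ρ y * g y ω ^ 2 := by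
        gcongr with ω; exacts [hμ ω, jensen ω]
    _ = ∑ y, ρ y * ∑ ω, g y ω ^ 2 * μ ω := by
        simp only [mul_sum]; rw [sum_comm]; simp only [mul_comm, mul_left_comm]
    _ ≤ ∑ y, ρ y * v := by gcongr with y; exacts [hρ y, hg y]
    _ = v := by rw [← sum_mul, hρsum, one_mul]

noncomputable def weightedMgf {X : Type*} [Fintype X] (p V : X → ℝ) (t : ℝ) : ℝ :=
  ∑ x, p x * exp (t * V x)

theorem weightedMgf_pos {X : Type*} [Fintype X] [Nonempty X] {p : X → ℝ} (hp : ∀ x, 0 < p x)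
    (V : X → ℝ) (t : ℝ) : 0 < weightedMgf p V t :=
  sum_pos (fun x _ => mul_pos (hp x) (exp_pos _)) univ_nonempty

theorem weightedMgf_sup_mul_inv_le {Ω Y : Type*} [Fintype Ω] [Fintype Y] [Nonempty Y]
    {μ : Ω → ℝ} (hμ : ∀ ω, 0 ≤ μ ω) (hμsum : ∑ ω, μ ω = 1)
    {F : Finset (Ω → ℝ)} (hF : F.Nonempty) (hrange : ∀ f ∈ F, ∀ ω, f ω ∈ Set.Icc (0 : ℝ) 1)
    {v : ℝ} (hv : ∀ f ∈ F, ∑ ω, f ω ^ 2 * μ ω ≤ v) {t : ℝ} (ht0 : 0 ≤ t) (ht1 : t ≤ 1)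
    {w : Y → ℝ} (hw : ∀ y, 0 < w y) (U : (Ω → ℝ) → Y → ℝ) :
    (∑ ω, μ ω * weightedMgf w (fun y => F.sup' hF fun f => U f y - f ω) t) *
      (∑ ω, μ ω * (weightedMgf w (fun y => F.sup' hF fun f => U f y - f ω) t)⁻¹) ≤
      exp (31 / 28 * t ^ 2 * v) := by
  choose g hgF hg using fun y => exists_mem_eq_sup' hF fun f => U f y
  set b : Y → ℝ := fun y => t * F.sup' hF fun f => U f y
  set q := ∑ y, w y * exp (b y)
  have hq : 0 < q := sum_pos (fun y _ => mul_pos (hw y) (exp_pos _)) univ_nonempty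
  have hw0 : ∀ y, 0 ≤ w y := fun y => (hw y).le
  set m : Ω → ℝ := fun ω => ∑ y, expTilt w b y * g y ω
  have hm0 : ∀ ω, 0 ≤ m ω := fun ω =>
    sum_nonneg fun y _ => mul_nonneg (expTilt_nonneg hw0 b y) (hrange _ (hgF y) ω).1
  have hm1 : ∀ ω, m ω ≤ 1 := fun ω => by
    calc m ω ≤ ∑ y, expTilt w b y * 1 :=
          sum_le_sum fun y _ => mul_le_mul_of_nonneg_left (hrange _ (hgF y) ω).2
            (expTilt_nonneg hw0 b y)
      _ = 1 := by rw [← sum_mul, sum_expTilt hq.ne', one_mul]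
  have hmsq : ∑ ω, μ ω * m ω ^ 2 ≤ v :=
    sum_mul_sum_mul_sq_le hμ (expTilt_nonneg hw0 b) (sum_expTilt hq.ne') fun y => hv _ (hgF y)
  have hle_q : ∀ ω, weightedMgf w (fun y => F.sup' hF fun f => U f y - f ω) t ≤ q := fun ω => by
    refine sum_le_sum fun y _ => mul_le_mul_of_nonneg_left (exp_le_exp.2 ?_) (hw0 y)
    refine mul_le_mul_of_nonneg_left (Finset.sup'_le hF _ fun f hf => ?_) ht0
    linarith [le_sup' (fun f => U f y) hf, (hrange f hf ω).1]
  have hq_le : ∀ ω, q * exp (-(t * m ω)) ≤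
      weightedMgf w (fun y => F.sup' hF fun f => U f y - f ω) t := fun ω => by
    have hsum : t * m ω = ∑ y, expTilt w b y * (t * g y ω) := by
      simp only [m, mul_sum]; exact sum_congr rfl fun y _ => by ring
    rw [hsum]
    refine (mul_exp_neg_sum_expTilt_mul_le hw0 hq _).trans
      (sum_le_sum fun y _ => mul_le_mul_of_nonneg_left (exp_le_exp.2 ?_) (hw0 y))
    rw [← mul_sub, hg y]
    refine mul_le_mul_of_nonneg_left ?_ ht0
    exact le_sup' (fun f => U f y - f ω) (hgF y)
  have htm : ∀ ω, |t * m ω| ≤ 1 := fun ω => abs_le.2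
    ⟨by nlinarith [hm0 ω], by nlinarith [hm0 ω, hm1 ω]⟩
  calc _ ≤ exp (31 / 28 * ∑ ω, μ ω * (t * m ω) ^ 2) :=
        sum_mul_mul_sum_mul_inv_le hμ hμsum hq htm hle_q hq_le
    _ ≤ exp (31 / 28 * t ^ 2 * v) := by
        simp only [mul_pow, mul_left_comm _ (t ^ 2), ← mul_sum, mul_assoc]
        gcongr

section Product

variable {Ω : Type*} [Fintype Ω]

theorem weightedMgf_prod_succ {n : ℕ} (μ : Ω → ℝ) (V : (Fin (n + 1) → Ω) → ℝ) (t : ℝ) :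
    weightedMgf (fun x => ∏ i, μ (x i)) V t =
      ∑ ω, μ ω * weightedMgf (fun y : Fin n → Ω => ∏ i, μ (y i)) (fun y => V (Fin.cons ω y)) t := by
  simp only [weightedMgf, ← (Fin.consEquiv fun _ => Ω).sum_comp, Fintype.sum_prod_type, mul_sum]
  refine sum_congr rfl fun ω _ => sum_congr rfl fun y _ => ?_
  simp [Fin.consEquiv, Fin.prod_univ_succ, mul_assoc]

theorem weightedMgf_sup_mul_weightedMgf_neg_le [Nonempty Ω] {μ : Ω → ℝ} (hμ : ∀ ω, 0 < μ ω)
    (hμsum : ∑ ω, μ ω = 1) {F : Finset (Ω → ℝ)} (hF : F.Nonempty)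
    (hrange : ∀ f ∈ F, ∀ ω, f ω ∈ Set.Icc (0 : ℝ) 1) {v : ℝ}
    (hv : ∀ f ∈ F, ∑ ω, f ω ^ 2 * μ ω ≤ v) {t : ℝ} (ht0 : 0 ≤ t) (ht1 : t ≤ 1)
    (n : ℕ) (c : (Ω → ℝ) → ℝ) :
    weightedMgf (fun x : Fin n → Ω => ∏ i, μ (x i))
        (fun x => F.sup' hF fun f => c f - ∑ i, f (x i)) t *
      weightedMgf (fun x : Fin n → Ω => ∏ i, μ (x i))
        (fun x => F.sup' hF fun f => c f - ∑ i, f (x i)) (-t) ≤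
      exp (n * (31 / 28 * t ^ 2 * v)) := by
  induction n generalizing c with
  | zero => simp [weightedMgf, ← exp_add]
  | succ n ih =>
    set K := exp (n * (31 / 28 * t ^ 2 * v))
    set w : (Fin n → Ω) → ℝ := fun y => ∏ i, μ (y i)
    have hw : ∀ y, 0 < w y := fun y => prod_pos fun i _ => hμ (y i)
    set V : Ω → (Fin n → Ω) → ℝ := fun ω y => F.sup' hF fun f => (c f - ∑ i, f (y i)) - f ω
    have hcons : ∀ ω,
        (fun y => F.sup' hF fun f => c f - ∑ i, f ((Fin.cons ω y : Fin (n + 1) → Ω) i)) = V ω :=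
      fun ω => funext fun y => sup'_congr hF rfl fun f _ => by
        rw [Fin.sum_univ_succ]; simp only [Fin.cons_zero, Fin.cons_succ]; ring
    have hpair : ∀ ω, weightedMgf w (V ω) t * weightedMgf w (V ω) (-t) ≤ K := fun ω => by
      have hshift : V ω = fun y => F.sup' hF fun f => (c f - f ω) - ∑ i, f (y i) :=
        funext fun y => sup'_congr hF rfl fun f _ => by ring
      rw [hshift]
      exact ih fun f => c f - f ω
    have hneg : ∀ ω, weightedMgf w (V ω) (-t) ≤ K * (weightedMgf w (V ω) t)⁻¹ := fun ω => by
      rw [← div_eq_mul_inv, le_div_iff₀ (weightedMgf_pos hw _ _), mul_comm]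
      exact hpair ω
    rw [weightedMgf_prod_succ, weightedMgf_prod_succ]
    simp only [hcons]
    calc (∑ ω, μ ω * weightedMgf w (V ω) t) * ∑ ω, μ ω * weightedMgf w (V ω) (-t)
        ≤ (∑ ω, μ ω * weightedMgf w (V ω) t) * ∑ ω, μ ω * (K * (weightedMgf w (V ω) t)⁻¹) := by
          refine mul_le_mul_of_nonneg_left
            (sum_le_sum fun ω _ => mul_le_mul_of_nonneg_left (hneg ω) (hμ ω).le)
            (sum_nonneg fun ω _ => mul_nonneg (hμ ω).le (weightedMgf_pos hw _ _).le)
      _ = K * ((∑ ω, μ ω * weightedMgf w (V ω) t) * ∑ ω, μ ω * (weightedMgf w (V ω) t)⁻¹) := by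
          simp only [mul_left_comm _ K, ← mul_sum]
      _ ≤ K * exp (31 / 28 * t ^ 2 * v) := mul_le_mul_of_nonneg_left
          (weightedMgf_sup_mul_inv_le (fun ω => (hμ ω).le) hμsum hF hrange hv ht0 ht1 hw
            fun f y => c f - ∑ i, f (y i)) (exp_pos _).le
      _ = exp ((n + 1 : ℕ) * (31 / 28 * t ^ 2 * v)) := by
          rw [← exp_add]; push_cast; ring_nf

end Product

section Chernoff

variable {X : Type*} [Fintype X] {p : X → ℝ}

theorem sum_filter_le_le_exp_mul_weightedMgf_neg (hp : ∀ x, 0 ≤ p x) (V : X → ℝ) {t : ℝ}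
    (ht : 0 ≤ t) (a : ℝ) :
    ∑ x ∈ univ.filter (fun x => V x ≤ a), p x ≤ exp (t * a) * weightedMgf p V (-t) := by
  rw [weightedMgf, mul_sum]
  calc ∑ x ∈ univ.filter (fun x => V x ≤ a), p x
      ≤ ∑ x ∈ univ.filter (fun x => V x ≤ a), exp (t * a) * (p x * exp (-t * V x)) :=
        sum_le_sum fun x hx => by
          have hexp : 1 ≤ exp (t * a) * exp (-t * V x) := by
            rw [← exp_add, one_le_exp_iff]
            nlinarith [(mem_filter.1 hx).2]
          nlinarith [hp x]
    _ ≤ ∑ x, exp (t * a) * (p x * exp (-t * V x)) :=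
        sum_le_sum_of_subset_of_nonneg (filter_subset _ _) fun x _ _ =>
          mul_nonneg (exp_pos _).le (mul_nonneg (hp x) (exp_pos _).le)

theorem sum_filter_le_mul_sum_filter_ge_le (hp : ∀ x, 0 ≤ p x) (V : X → ℝ) {t : ℝ}
    (ht : 0 ≤ t) (a b : ℝ) :
    (∑ x ∈ univ.filter (fun x => V x ≤ a), p x) * ∑ x ∈ univ.filter (fun x => b ≤ V x), p x ≤
      exp (-(t * (b - a))) * (weightedMgf p V t * weightedMgf p V (-t)) := by
  have hupper : ∑ x ∈ univ.filter (fun x => b ≤ V x), p x ≤ exp (t * -b) * weightedMgf p V t := by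
    have h := sum_filter_le_le_exp_mul_weightedMgf_neg hp (fun x => -V x) ht (-b)
    simpa only [neg_le_neg_iff, weightedMgf, neg_mul_neg] using h
  have hlower := sum_filter_le_le_exp_mul_weightedMgf_neg hp V ht a
  calc _ ≤ (exp (t * a) * weightedMgf p V (-t)) * (exp (t * -b) * weightedMgf p V t) :=
        mul_le_mul hlower hupper (sum_nonneg fun x _ => hp x)
          ((sum_nonneg fun x _ => hp x).trans hlower)
    _ = _ := by
        rw [show -(t * (b - a)) = t * a + t * -b by ring, exp_add]; ring

theorem sum_filter_le_sub_le_two_mul_exp (hp : ∀ x, 0 ≤ p x) {V : X → ℝ} {t M s K : ℝ}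
    (ht : 0 ≤ t) (hmedian : 1 / 2 ≤ ∑ x ∈ univ.filter (fun x => M ≤ V x), p x)
    (hmgf : weightedMgf p V t * weightedMgf p V (-t) ≤ exp K) :
    ∑ x ∈ univ.filter (fun x => V x ≤ M - s), p x ≤ 2 * exp (K - t * s) := by
  have hA : 0 ≤ ∑ x ∈ univ.filter (fun x => V x ≤ M - s), p x := sum_nonneg fun x _ => hp x
  have h := sum_filter_le_mul_sum_filter_ge_le hp V ht (M - s) M
  rw [sub_sub_cancel] at h
  suffices (∑ x ∈ univ.filter (fun x => V x ≤ M - s), p x) * (1 / 2) ≤ exp (K - t * s) by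
    linarith
  calc _ ≤ _ := mul_le_mul_of_nonneg_left hmedian hA
    _ ≤ exp (-(t * s)) * exp K := h.trans (mul_le_mul_of_nonneg_left hmgf (exp_pos _).le)
    _ = exp (K - t * s) := by rw [← exp_add]; ring_nf

end Chernoff

theorem exists_mul_sq_sub_mul_max_le {σ a : ℝ} (hσ : 0 ≤ σ) (ha : 0 ≤ a) :
    ∃ t, 0 ≤ t ∧ t ≤ 1 ∧ 31 / 28 * t ^ 2 * σ ^ 2 - t * (2 * max a (σ * √a)) ≤ -(25 / 28 * a) := by
  rcases le_or_gt (σ ^ 2) a with hσa | hσa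
  · refine ⟨1, zero_le_one, le_rfl, ?_⟩
    nlinarith [le_max_left a (σ * √a)]
  · have hσ0 : 0 < σ := by nlinarith
    have hsqrt : √a ≤ σ := by rw [← sqrt_sq hσ]; exact sqrt_le_sqrt hσa.le
    refine ⟨√a / σ, by positivity, (div_le_one hσ0).2 hsqrt, ?_⟩
    have hsq : (√a / σ) ^ 2 * σ ^ 2 = a := by rw [div_pow, sq_sqrt ha]; field_simp
    have hlin : √a / σ * (σ * √a) = a := by field_simp; exact sq_sqrt ha
    have hmax := mul_le_mul_of_nonneg_left (le_max_right a (σ * √a)) (by positivity : 0 ≤ √a / σ)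
    nlinarith

theorem concentration_below_median_general {Ω : Type*} [Fintype Ω] [Nonempty Ω]
    (μ : Ω → ℝ) (hμpos : ∀ ω, 0 < μ ω) (hμsum : ∑ ω, μ ω = 1)
    (n : ℕ) (F : Finset (Ω → ℝ)) (hF : F.Nonempty)
    (hrange : ∀ f ∈ F, ∀ ω, f ω ∈ Set.Icc (0 : ℝ) 1)
    (Z : (Fin n → Ω) → ℝ)
    (hZ : ∀ x, Z x = F.sup' hF (fun f => ∑ i : Fin n, ((∑ ω, f ω * μ ω) - f (x i))))
    (σ : ℝ) (hσ : σ = Real.sqrt (n * F.sup' hF (fun f => ∑ ω, f ω ^ 2 * μ ω)))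
    (L : ℝ) (hL : L = 1.12)
    (M : ℝ)
    (hM2 : (1 : ℝ) / 2 ≤ ∑ x ∈ univ.filter (fun x : Fin n → Ω => M ≤ Z x), ∏ i, μ (x i))
    (u : ℝ) (hu : 0 < u) :
    ∑ x ∈ univ.filter
        (fun x : Fin n → Ω => Z x ≤ M - 2 * max (L * u) (σ * Real.sqrt (L * u))),
      ∏ i, μ (x i) ≤ 2 * Real.exp (-u) := by
  set v := F.sup' hF fun f => ∑ ω, f ω ^ 2 * μ ω
  have hv : ∀ f ∈ F, ∑ ω, f ω ^ 2 * μ ω ≤ v := fun f hf => le_sup' (fun f => ∑ ω, f ω ^ 2 * μ ω) hf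
  have hσv : σ ^ 2 = n * v := by
    obtain ⟨f, hf⟩ := hF
    have hv0 := (sum_nonneg fun ω _ => mul_nonneg (sq_nonneg (f ω)) (hμpos ω).le).trans (hv f hf)
    rw [hσ, sq_sqrt (by positivity)]
  obtain ⟨t, ht0, ht1, hexponent⟩ :=
    exists_mul_sq_sub_mul_max_le (hσ ▸ sqrt_nonneg _) (by rw [hL]; positivity : 0 ≤ L * u)
  have hZ' : Z = fun x => F.sup' hF fun f => n * (∑ ω, f ω * μ ω) - ∑ i, f (x i) :=
    funext fun x => by
      rw [hZ]
      exact sup'_congr hF rfl fun f _ => by simp [sum_sub_distrib]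
  have hmgf := weightedMgf_sup_mul_weightedMgf_neg_le hμpos hμsum hF hrange hv ht0 ht1 n
    fun f => n * ∑ ω, f ω * μ ω
  rw [← hZ'] at hmgf
  refine (sum_filter_le_sub_le_two_mul_exp
    (fun x => prod_nonneg fun i _ => (hμpos (x i)).le) ht0 hM2 hmgf).trans ?_
  have hLu : 25 / 28 * (L * u) = u := by rw [hL]; ring
  have hσt : n * (31 / 28 * t ^ 2 * v) = 31 / 28 * t ^ 2 * σ ^ 2 := by rw [hσv]; ring
  gcongr
  linarith

/-- For L = 1.12 and M a median of Z, for every u > 0,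
P(Z ≤ M − 2 max(Lu, σ√(Lu))) ≤ 2 e^{−u}. -/
theorem concentration_below_median {Ω : Type*} [Fintype Ω] [DecidableEq Ω] [Nonempty Ω]
    (μ : Ω → ℝ) (hμpos : ∀ ω, 0 < μ ω) (hμsum : ∑ ω, μ ω = 1)
    (n : ℕ) (F : Finset (Ω → ℝ)) (hF : F.Nonempty)
    (hrange : ∀ f ∈ F, ∀ ω, f ω ∈ Set.Icc (0 : ℝ) 1)
    (Z : (Fin n → Ω) → ℝ)
    (hZ : ∀ x, Z x = F.sup' hF (fun f => ∑ i : Fin n, ((∑ ω, f ω * μ ω) - f (x i))))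
    (σ : ℝ) (hσ : σ = Real.sqrt (n * F.sup' hF (fun f => ∑ ω, f ω ^ 2 * μ ω)))
    (L : ℝ) (hL : L = 1.12)
    (M : ℝ)
    (hM1 : (1 : ℝ) / 2 ≤ ∑ x ∈ univ.filter (fun x : Fin n → Ω => Z x ≤ M), ∏ i, μ (x i))
    (hM2 : (1 : ℝ) / 2 ≤ ∑ x ∈ univ.filter (fun x : Fin n → Ω => M ≤ Z x), ∏ i, μ (x i))
    (u : ℝ) (hu : 0 < u) :
    ∑ x ∈ univ.filter
        (fun x : Fin n → Ω => Z x ≤ M - 2 * max (L * u) (σ * Real.sqrt (L * u))),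
      ∏ i, μ (x i) ≤ 2 * Real.exp (-u) :=
  concentration_below_median_general μ hμpos hμsum n F hF hrange Z hZ σ hσ L hL M hM2 u hu
end
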